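/- arXiv:2307.10116 — 2 statements merged into one kernel-verified Lean document; each statement's English description precedes it below -/
import Mathlib

section
/- Let λ > 0, δ ∈ (0,1), and let μ be a probability measure on ℝ with μ([0,∞)) = 1, λ m₁ ≤ 1 − δ, and m₂ < ∞. Then for every s > 0 one has |s φ(s) − s² φ′(s)| ≤ (λ m₂ / 2) s³, and consequently |s φ(s) − s² φ′(s)| / |φ(s)|³ ≤ λ m₂ / (2 δ³). -/
/-!
Linearity of the integral gives `s φ(s) − s² φ′(s) = λ s ∫ (e^{isx} − 1 − isx e^{isx}) dμ(x)`, and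
`e^{iu} − 1 − iu e^{iu} = ∫₀^u t e^{it} dt` has modulus at most `u²/2`; integrating this against `μ`
gives the cubic bound. For the denominator, `Im φ(s) = λ ∫ sin(sx) dμ(x) − s ≤ −(1 − ρ) s` because
`sin y ≤ y` for `y ≥ 0`, so `|φ(s)| ≥ δ s`.
-/

open MeasureTheory

/-- The characteristic function of a measure `μ` on `ℝ`. -/
noncomputable def charFn (μ : Measure ℝ) (s : ℝ) : ℂ :=
  ∫ x, Complex.exp (Complex.I * s * x) ∂μ

/-- The characteristic exponent `φ(s) = λ(γ(s) − 1) − i s` of the net input process. -/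
noncomputable def phi (lam : ℝ) (μ : Measure ℝ) (s : ℝ) : ℂ :=
  lam * (charFn μ s - 1) - Complex.I * s

/-- The derivative of the characteristic exponent: `φ′(s) = λ ∫ i x exp(i s x) dμ(x) − i`. -/
noncomputable def phiDeriv (lam : ℝ) (μ : Measure ℝ) (s : ℝ) : ℂ :=
  lam * ∫ x, Complex.I * x * Complex.exp (Complex.I * s * x) ∂μ - Complex.I

/-- The `k`-th moment of a measure on `ℝ`. -/
noncomputable def moment (μ : Measure ℝ) (k : ℕ) : ℝ :=
  ∫ x, x ^ k ∂μ

open Complex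

lemma hasDerivAt_cexp_I_mul_sub_one_sub_I_mul_mul_cexp (t : ℝ) :
    HasDerivAt (fun t : ℝ => exp (I * t) - 1 - I * t * exp (I * t)) (t * exp (I * t)) t := by
  have hI : HasDerivAt (fun t : ℝ => I * t) I t := by
    simpa using ((hasDerivAt_id t).ofReal_comp).const_mul I
  have hexp : HasDerivAt (fun t : ℝ => exp (I * t)) (exp (I * t) * I) t := hI.cexp
  refine ((hexp.sub_const 1).sub (hI.mul hexp)).congr_deriv ?_
  linear_combination -((t : ℂ) * exp (I * t)) * I_mul_I

lemma norm_cexp_I_mul_sub_one_sub_I_mul_mul_cexp_of_nonneg {u : ℝ} (hu : 0 ≤ u) :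
    ‖exp (I * u) - 1 - I * u * exp (I * u)‖ ≤ u ^ 2 / 2 := by
  have hFTC : ∫ t in (0 : ℝ)..u, (t : ℂ) * exp (I * t)
      = exp (I * u) - 1 - I * u * exp (I * u) := by
    rw [intervalIntegral.integral_eq_sub_of_hasDerivAt
      (fun t _ => hasDerivAt_cexp_I_mul_sub_one_sub_I_mul_mul_cexp t)
      ((by fun_prop : Continuous fun t : ℝ => (t : ℂ) * exp (I * t)).intervalIntegrable 0 u)]
    simp
  rw [← hFTC]
  calc ‖∫ t in (0 : ℝ)..u, (t : ℂ) * exp (I * t)‖ ≤ ∫ t in (0 : ℝ)..u, t := by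
        refine intervalIntegral.norm_integral_le_of_norm_le hu (.of_forall fun t ht => ?_)
          (continuous_id.intervalIntegrable 0 u)
        simp [norm_exp_I_mul_ofReal, abs_of_pos ht.1]
    _ = u ^ 2 / 2 := by simp [integral_id]

lemma norm_cexp_I_mul_sub_one_sub_I_mul_mul_cexp_le (u : ℝ) :
    ‖exp (I * u) - 1 - I * u * exp (I * u)‖ ≤ u ^ 2 / 2 := by
  rcases le_total 0 u with hu | hu
  · exact norm_cexp_I_mul_sub_one_sub_I_mul_mul_cexp_of_nonneg hu
  · have hconj : (starRingEnd ℂ) (exp (I * u) - 1 - I * u * exp (I * u))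
        = exp (I * ↑(-u)) - 1 - I * ↑(-u) * exp (I * ↑(-u)) := by
      simp only [map_sub, map_mul, map_one, ← exp_conj, conj_I, conj_ofReal, ofReal_neg]
      ring_nf
    rw [← RCLike.norm_conj, hconj]
    simpa using norm_cexp_I_mul_sub_one_sub_I_mul_mul_cexp_of_nonneg (neg_nonneg.2 hu)

section

variable {μ : Measure ℝ}

lemma integrable_cexp_I_mul_mul [IsFiniteMeasure μ] (s : ℝ) :
    Integrable (fun x : ℝ => exp (I * s * x)) μ := by
  refine .of_bound (by fun_prop : Continuous _).aestronglyMeasurable 1 (.of_forall fun x => ?_)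
  rw [mul_assoc, ← ofReal_mul, norm_exp_I_mul_ofReal]

lemma integrable_I_mul_mul_cexp (h1 : Integrable (fun x => x) μ) (s : ℝ) :
    Integrable (fun x : ℝ => I * x * exp (I * s * x)) μ := by
  refine (h1.ofReal.const_mul I).mul_bdd (by fun_prop : Continuous _).aestronglyMeasurable
    (c := 1) (.of_forall fun x => ?_)
  rw [mul_assoc, ← ofReal_mul, norm_exp_I_mul_ofReal]

lemma s_mul_phi_sub_sq_mul_phiDeriv_eq_integral [IsProbabilityMeasure μ]
    (h1 : Integrable (fun x => x) μ) (lam s : ℝ) :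
    s * phi lam μ s - s ^ 2 * phiDeriv lam μ s
      = lam * s * ∫ x, (exp (I * ↑(s * x)) - 1 - I * ↑(s * x) * exp (I * ↑(s * x))) ∂μ := by
  have hintegrand : (fun x : ℝ => exp (I * ↑(s * x)) - 1 - I * ↑(s * x) * exp (I * ↑(s * x)))
      = fun x : ℝ => exp (I * s * x) - 1 - s * (I * x * exp (I * s * x)) := by
    ext x
    push_cast
    ring_nf
  rw [hintegrand, integral_sub (f := fun x : ℝ => exp (I * s * x) - 1)
      ((integrable_cexp_I_mul_mul s).sub (integrable_const 1))
      ((integrable_I_mul_mul_cexp h1 s).const_mul _),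
    integral_sub (integrable_cexp_I_mul_mul s) (integrable_const 1), integral_const_mul]
  simp only [phi, phiDeriv, charFn, integral_const, probReal_univ, one_smul]
  ring

lemma norm_s_mul_phi_sub_sq_mul_phiDeriv_le [IsProbabilityMeasure μ]
    (h1 : Integrable (fun x => x) μ) (h2 : Integrable (fun x => x ^ 2) μ) (lam s : ℝ) :
    ‖s * phi lam μ s - s ^ 2 * phiDeriv lam μ s‖ ≤ |lam| * moment μ 2 / 2 * |s| ^ 3 := by
  have hintegral : ‖∫ x, (exp (I * ↑(s * x)) - 1 - I * ↑(s * x) * exp (I * ↑(s * x))) ∂μ‖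
      ≤ s ^ 2 / 2 * moment μ 2 := by
    rw [moment, ← integral_const_mul]
    exact norm_integral_le_of_norm_le (h2.const_mul _) (.of_forall fun x =>
      (norm_cexp_I_mul_sub_one_sub_I_mul_mul_cexp_le (s * x)).trans_eq (by ring))
  rw [s_mul_phi_sub_sq_mul_phiDeriv_eq_integral h1, norm_mul, norm_mul, norm_real, norm_real,
    Real.norm_eq_abs, Real.norm_eq_abs]
  calc |lam| * |s| * ‖∫ x, (exp (I * ↑(s * x)) - 1 - I * ↑(s * x) * exp (I * ↑(s * x))) ∂μ‖
      ≤ |lam| * |s| * (s ^ 2 / 2 * moment μ 2) := by gcongr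
    _ = |lam| * moment μ 2 / 2 * |s| ^ 3 := by rw [← sq_abs s]; ring

lemma phi_im [IsFiniteMeasure μ] (lam s : ℝ) :
    (phi lam μ s).im = lam * ∫ x, Real.sin (s * x) ∂μ - s := by
  have hcharFn : (charFn μ s).im = ∫ x, Real.sin (s * x) ∂μ := by
    rw [charFn, ← RCLike.im_to_complex, ← integral_im (integrable_cexp_I_mul_mul s)]
    congr with x
    rw [RCLike.im_to_complex, mul_assoc, ← ofReal_mul, mul_comm, exp_ofReal_mul_I_im]
  simp [phi, hcharFn]

lemma mul_one_sub_le_norm_phi [IsFiniteMeasure μ] (hμ : ∀ᵐ x ∂μ, 0 ≤ x)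
    (h1 : Integrable (fun x => x) μ) {lam s : ℝ} (hlam : 0 ≤ lam) (hs : 0 ≤ s) :
    s * (1 - lam * moment μ 1) ≤ ‖phi lam μ s‖ := by
  have hsin : ∫ x, Real.sin (s * x) ∂μ ≤ s * moment μ 1 := by
    rw [moment, funext fun x : ℝ => pow_one x, ← integral_const_mul]
    refine integral_mono_ae ?_ (h1.const_mul s)
      (hμ.mono fun x hx => Real.sin_le (mul_nonneg hs hx))
    exact .of_bound (by fun_prop : Continuous _).aestronglyMeasurable 1
      (.of_forall fun x => Real.abs_sin_le_one _)
  calc s * (1 - lam * moment μ 1) ≤ -(phi lam μ s).im := by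
        rw [phi_im]; nlinarith [mul_le_mul_of_nonneg_left hsin hlam]
    _ ≤ ‖phi lam μ s‖ := (neg_le_abs _).trans (abs_im_le_norm _)

end

/-- If `λ m₁ ≤ 1 − δ` and `m₂ < ∞`, then for `s > 0`,
`|s φ(s) − s² φ′(s)| ≤ (λ m₂ / 2) s³`, and consequently
`|s φ(s) − s² φ′(s)| / |φ(s)|³ ≤ λ m₂ / (2 δ³)`. -/
theorem abs_s_phi_sub_sq_phiDeriv (lam : ℝ) (hlam : 0 < lam) (δ : ℝ)
    (hδ : δ ∈ Set.Ioo (0 : ℝ) 1) (μ : Measure ℝ) [IsProbabilityMeasure μ]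
    (hsupp : μ (Set.Ici 0) = 1)
    (h1 : Integrable (fun x => x) μ) (h2 : Integrable (fun x => x ^ 2) μ)
    (hρ : lam * moment μ 1 ≤ 1 - δ) :
    ∀ s : ℝ, 0 < s →
      ‖(s : ℂ) * phi lam μ s - (s : ℂ) ^ 2 * phiDeriv lam μ s‖
        ≤ lam * moment μ 2 / 2 * s ^ 3 ∧
      ‖(s : ℂ) * phi lam μ s - (s : ℂ) ^ 2 * phiDeriv lam μ s‖
          / ‖phi lam μ s‖ ^ 3
        ≤ lam * moment μ 2 / (2 * δ ^ 3) := by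
  intro s hs
  have hμ : ∀ᵐ x ∂μ, 0 ≤ x :=
    (ae_iff_measure_eq measurableSet_Ici.nullMeasurableSet).2 (by rw [measure_univ]; exact hsupp)
  have hnum : ‖(s : ℂ) * phi lam μ s - (s : ℂ) ^ 2 * phiDeriv lam μ s‖
      ≤ lam * moment μ 2 / 2 * s ^ 3 := by
    simpa [abs_of_pos hlam, abs_of_pos hs] using norm_s_mul_phi_sub_sq_mul_phiDeriv_le h1 h2 lam s
  have hden : δ * s ≤ ‖phi lam μ s‖ := by
    nlinarith [mul_one_sub_le_norm_phi hμ h1 hlam.le hs.le]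
  refine ⟨hnum, ?_⟩
  have hδs : 0 < δ * s := mul_pos hδ.1 hs
  calc _ ≤ lam * moment μ 2 / 2 * s ^ 3 / (δ * s) ^ 3 :=
        div_le_div₀ ((norm_nonneg _).trans hnum) hnum (by positivity)
          (pow_le_pow_left₀ hδs.le hden 3)
    _ = lam * moment μ 2 / (2 * δ ^ 3) := by field_simp
end

section
/- Let λ > 0 and let μ be a probability measure on ℝ with μ([0,∞)) = 1, ρ = λ m₁ < 1, and m₂ < ∞. Then the function s ↦ (s φ(s) − s² φ′(s)) / φ(s)³, defined for s > 0, converges as s → 0⁺ to −φ″(0) / (2 φ′(0)³) = −i λ m₂ / (2 (1 − ρ)³), where φ″(0) = λ ∫ (i x)² dμ(x) = −λ m₂. -/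
open MeasureTheory

/-!
Since `m₂ < ∞`, the characteristic function `γ` is `C²`, hence so is `φ`, with `φ(0) = 0`,
`φ′(0) = −i(1 − ρ) ≠ 0` and `φ″(0) = −λ m₂`. For any such function, second-order Taylor expansion
gives `s φ(s) − s² φ′(s) = −φ″(0) s³ / 2 + o(s³)`, while `φ(s) / s → φ′(0)`; dividing by
`φ(s)³ = s³ (φ(s) / s)³` yields the limit `−φ″(0) / (2 φ′(0)³)`.
-/

open Filter Topology Complex Asymptotics

section TaylorTwo

variable {E : Type*} [NormedAddCommGroup E] [NormedSpace ℝ E]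

theorem isLittleO_sub_taylor_two {f : ℝ → E} (hf : ContDiff ℝ 2 f) :
    (fun s => f s - (f 0 + s • deriv f 0 + (s ^ 2 / 2) • iteratedDeriv 2 f 0))
      =o[𝓝 0] fun s => s ^ 2 := by
  convert taylor_isLittleO_univ (x₀ := 0) hf using 3 with s s
  · norm_num [taylor_within_apply, Finset.sum_range_succ, div_eq_inv_mul]
  · simp

theorem ContDiff.hasDerivAt_deriv_iteratedDeriv_two {f : ℝ → E} (hf : ContDiff ℝ 2 f) (x : ℝ) :
    HasDerivAt (deriv f) (iteratedDeriv 2 f x) x := by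
  simpa [iteratedDeriv_succ] using
    ((hf.differentiable_iteratedDeriv 1 (by norm_num)).differentiableAt (x := x)).hasDerivAt

end TaylorTwo

section Ratio

variable {f : ℝ → ℂ}

theorem tendsto_sub_mul_deriv_div_sq (hf : ContDiff ℝ 2 f) (h0 : f 0 = 0) :
    Tendsto (fun s : ℝ => (f s - s * deriv f s) / (s : ℂ) ^ 2) (𝓝[≠] 0)
      (𝓝 (-iteratedDeriv 2 f 0 / 2)) := by
  set a := deriv f 0
  set b := iteratedDeriv 2 f 0
  have htaylor : Tendsto (fun s : ℝ => (f s - (s * a + s ^ 2 / 2 * b)) / (s : ℂ) ^ 2)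
      (𝓝[≠] 0) (𝓝 0) := by
    have := isLittleO_ofReal_right.2 (isLittleO_sub_taylor_two hf)
    simpa [h0] using this.tendsto_div_nhds_zero.mono_left nhdsWithin_le_nhds
  have hderiv : Tendsto (fun s : ℝ => (deriv f s - (a + s * b)) / s) (𝓝[≠] 0) (𝓝 0) := by
    have := isLittleO_ofReal_right.2
      (hasDerivAt_iff_isLittleO.1 (hf.hasDerivAt_deriv_iteratedDeriv_two 0))
    simpa [sub_sub, mul_comm] using this.tendsto_div_nhds_zero.mono_left nhdsWithin_le_nhds
  have := (htaylor.sub hderiv).sub_const (b / 2)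
  rw [sub_zero, zero_sub, ← neg_div] at this
  refine this.congr' (eventually_nhdsWithin_of_forall fun s (hs : s ≠ 0) => ?_)
  have : (s : ℂ) ≠ 0 := by exact_mod_cast hs
  field_simp
  ring

theorem tendsto_mul_sub_sq_mul_deriv_div_cube (hf : ContDiff ℝ 2 f) (h0 : f 0 = 0)
    (ha : deriv f 0 ≠ 0) :
    Tendsto (fun s : ℝ => ((s : ℂ) * f s - (s : ℂ) ^ 2 * deriv f s) / f s ^ 3) (𝓝[≠] 0)
      (𝓝 (-iteratedDeriv 2 f 0 / (2 * deriv f 0 ^ 3))) := by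
  have hslope : Tendsto (fun s : ℝ => f s / s) (𝓝[≠] 0) (𝓝 (deriv f 0)) := by
    have := hasDerivAt_iff_tendsto_slope_zero.1 ((hf.differentiable (by norm_num)) 0).hasDerivAt
    simpa [h0, div_eq_inv_mul] using this
  have := (tendsto_sub_mul_deriv_div_sq hf h0).div (hslope.pow 3) (pow_ne_zero 3 ha)
  rw [div_div] at this
  refine this.congr' (eventually_nhdsWithin_of_forall fun s (hs : s ≠ 0) => ?_)
  have : (s : ℂ) ≠ 0 := by exact_mod_cast hs
  simp only [Pi.div_apply]
  rw [div_pow, div_div_eq_mul_div]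
  field_simp

end Ratio

theorem charFn_eq_charFun (μ : Measure ℝ) : charFn μ = charFun μ := by
  ext s
  simp only [charFn, charFun_apply_real]
  congr with x
  ring_nf

theorem phi_eq (lam : ℝ) (μ : Measure ℝ) :
    phi lam μ = fun s => lam * (charFun μ s - 1) - I * s := by
  ext s
  rw [phi, charFn_eq_charFun]

section Phi

variable (lam : ℝ) {μ : Measure ℝ}

theorem phi_zero [IsProbabilityMeasure μ] : phi lam μ 0 = 0 := by
  simp [phi_eq]

theorem phiDeriv_zero : phiDeriv lam μ 0 = -I * (1 - lam * moment μ 1) := by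
  simp only [phiDeriv, moment, ofReal_zero, mul_zero, zero_mul, exp_zero, mul_one, pow_one,
    integral_const_mul]
  rw [integral_complex_ofReal]
  ring

variable [IsFiniteMeasure μ]

theorem contDiff_phi (h2 : MemLp id 2 μ) : ContDiff ℝ 2 (phi lam μ) := by
  rw [phi_eq]
  have := contDiff_charFun h2
  have : ContDiff ℝ 2 fun s : ℝ => (s : ℂ) := ofRealCLM.contDiff
  fun_prop

theorem deriv_phi_eq (h1 : MemLp id 1 μ) :
    deriv (phi lam μ) = fun s => lam * deriv (charFun μ) s - I := by
  ext s
  have hd := ((contDiff_charFun (n := 1) (by exact_mod_cast h1)).differentiable one_ne_zero s)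
  have hs : HasDerivAt (fun s : ℝ => I * s) I s := by
    simpa using ((hasDerivAt_id s).ofReal_comp).const_mul I
  rw [phi_eq]
  exact (((hd.hasDerivAt.sub_const 1).const_mul _).sub hs).deriv

theorem deriv_phi (h1 : MemLp id 1 μ) : deriv (phi lam μ) = phiDeriv lam μ := by
  ext s
  have h := iteratedDeriv_charFun (n := 1) (t := s) (by exact_mod_cast h1)
  rw [iteratedDeriv_one] at h
  simp only [deriv_phi_eq lam h1, h, phiDeriv, ← integral_const_mul]
  congr 2 with x
  ring_nf

theorem iteratedDeriv_two_phi_zero (h2 : MemLp id 2 μ) :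
    iteratedDeriv 2 (phi lam μ) 0 = -lam * moment μ 2 := by
  have hd := ((contDiff_charFun h2).hasDerivAt_deriv_iteratedDeriv_two 0).const_mul (lam : ℂ)
  rw [iteratedDeriv_succ, iteratedDeriv_one, deriv_phi_eq lam (h2.mono_exponent one_le_two),
    deriv_sub_const, hd.deriv, iteratedDeriv_charFun_zero h2, moment]
  simp

end Phi

theorem tendsto_s_phi_ratio_general (lam : ℝ) (μ : Measure ℝ)
    [IsProbabilityMeasure μ]
    (h2 : Integrable (fun x => x ^ 2) μ)
    (hρ : lam * moment μ 1 < 1) :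
    Filter.Tendsto
      (fun s : ℝ =>
        ((s : ℂ) * phi lam μ s - (s : ℂ) ^ 2 * phiDeriv lam μ s) / (phi lam μ s) ^ 3)
      (nhdsWithin 0 (Set.Ioi 0))
      (nhds (-Complex.I * lam * moment μ 2 / (2 * ((1 : ℂ) - lam * moment μ 1) ^ 3))) := by
  have hμ2 : MemLp id 2 μ := (memLp_two_iff_integrable_sq aestronglyMeasurable_id).2 h2
  have hderiv := deriv_phi lam (hμ2.mono_exponent one_le_two)
  have hρ' : (1 : ℂ) - lam * moment μ 1 ≠ 0 := by exact_mod_cast (sub_pos.2 hρ).ne'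
  have ha : deriv (phi lam μ) 0 ≠ 0 := by
    rw [hderiv, phiDeriv_zero]
    exact mul_ne_zero (neg_ne_zero.2 I_ne_zero) hρ'
  have hlim := (tendsto_mul_sub_sq_mul_deriv_div_cube (contDiff_phi lam hμ2) (phi_zero lam) ha)
    |>.mono_left (nhdsGT_le_nhdsNE 0)
  rw [hderiv, phiDeriv_zero, iteratedDeriv_two_phi_zero lam hμ2] at hlim
  convert hlim using 2
  rw [div_eq_div_iff (by simp [hρ']) (by simp [hρ'])]
  linear_combination 2 * lam * moment μ 2 * (1 - lam * moment μ 1) ^ 3 * (I ^ 2 - 1) * I_sq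

/-- If `ρ = λ m₁ < 1` and `m₂ < ∞`, then `(s φ(s) − s² φ′(s)) / φ(s)³ → −i λ m₂ / (2 (1 − ρ)³)`
as `s → 0⁺`. -/
theorem tendsto_s_phi_ratio (lam : ℝ) (hlam : 0 < lam) (μ : Measure ℝ)
    [IsProbabilityMeasure μ] (hsupp : μ (Set.Ici 0) = 1)
    (h1 : Integrable (fun x => x) μ) (h2 : Integrable (fun x => x ^ 2) μ)
    (hρ : lam * moment μ 1 < 1) :
    Filter.Tendsto
      (fun s : ℝ =>
        ((s : ℂ) * phi lam μ s - (s : ℂ) ^ 2 * phiDeriv lam μ s) / (phi lam μ s) ^ 3)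
      (nhdsWithin 0 (Set.Ioi 0))
      (nhds (-Complex.I * lam * moment μ 2 / (2 * ((1 : ℂ) - lam * moment μ 1) ^ 3))) :=
  tendsto_s_phi_ratio_general lam μ h2 hρ
end
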